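/- For factors of length 2 of the Thue-Morse word, the only intertwining patterns that occur are (AB)^ω and (BA)^ω; in particular, no length-2 factor has intertwining sequence (ABBA)^ω. -/

import Mathlib

open scoped Classical

/-- The Thue-Morse word: parity of the binary digit sum. -/
def tm (n : ℕ) : ℕ := (Nat.digits 2 n).sum % 2

/-- `t[j..j+n-1] = t[i..i+n-1]` : an occurrence at `j` of the factor `t[i..i+n-1]`. -/
def feq (i j n : ℕ) : Prop := ∀ k < n, tm (j + k) = tm (i + k)

/-- `t[j..j+n-1]` is the binary complement of `t[i..i+n-1]`. -/
def feqc (i j n : ℕ) : Prop := ∀ k < n, tm (j + k) = 1 - tm (i + k)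

/-- Positions of occurrences of `x = t[i..i+n-1]` or its complement. -/
def occSet (i n : ℕ) : ℕ → Prop := fun j => feq i j n ∨ feqc i j n

/-- The intertwining sequence of `x = t[i..i+n-1]`: at index `m`, the label of the
`m`-th (in increasing order of position) occurrence of `x` or its complement;
`0` codes `A` (an occurrence of `x`), `1` codes `B` (an occurrence of the complement). -/
noncomputable def itw (i n m : ℕ) : ℕ :=
  if feq i (Nat.nth (occSet i n) m) n then 0 else 1

/-- The intertwining sequence is `(AB)^ω`. -/
def ABpat (i n : ℕ) : Prop := ∀ m, itw i n m = m % 2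

/-- The intertwining sequence is `(BA)^ω`. -/
def BApat (i n : ℕ) : Prop := ∀ m, itw i n m = (m + 1) % 2

/-- The intertwining sequence is `(ABBA)^ω`. -/
def ABBApat (i n : ℕ) : Prop :=
  ∀ m, itw i n m = if m % 4 = 0 ∨ m % 4 = 3 then 0 else 1

/-- The intertwining sequence is `(BAAB)^ω`. -/
def BAABpat (i n : ℕ) : Prop :=
  ∀ m, itw i n m = if m % 4 = 0 ∨ m % 4 = 3 then 1 else 0

/-- The length-`n` factor of the Thue-Morse word starting at position `i`, as a word. -/
def fac (i n : ℕ) : List ℕ := (List.range n).map (fun k => tm (i + k))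

lemma tm_lt_two (n : ℕ) : tm n < 2 := Nat.mod_lt _ (by norm_num)

lemma tm_two_mul (k : ℕ) : tm (2 * k) = tm k := by
  rcases Nat.eq_zero_or_pos k with h | h
  · simp [h]
  · unfold tm
    rw [Nat.digits_def' (by norm_num : 2 ≤ 2) (by omega)]
    simp [Nat.mul_div_cancel_left _ (by norm_num : 0 < 2), Nat.mul_mod_right]

lemma tm_two_mul_add_one (k : ℕ) : tm (2 * k + 1) = (tm k + 1) % 2 := by
  unfold tm
  rw [Nat.digits_def' (by norm_num : 2 ≤ 2) (by omega)]
  have h1 : (2 * k + 1) % 2 = 1 := by omega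
  have h2 : (2 * k + 1) / 2 = k := by omega
  rw [h1, h2]
  simp [List.sum_cons]
  omega

/-- Even positions: consecutive letters differ. -/
lemma tm_even_ne (k : ℕ) : tm (2 * k + 1) ≠ tm (2 * k) := by
  have h1 := tm_two_mul k
  have h2 := tm_two_mul_add_one k
  have h3 := tm_lt_two k
  omega

/-- If consecutive letters agree at `j`, then `j` is odd. -/
lemma odd_of_tm_eq {j : ℕ} (h : tm (j + 1) = tm j) : j % 2 = 1 := by
  by_contra hc
  have he : j = 2 * (j / 2) := by omega
  apply tm_even_ne (j / 2)
  rw [← he]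
  exact h

/-- Positions `4m+1` have equal consecutive letters. -/
lemma tm_eq_4m1 (m : ℕ) : tm (4 * m + 1 + 1) = tm (4 * m + 1) := by
  have h1 : tm (4 * m + 1) = (tm (2 * m) + 1) % 2 := by
    have := tm_two_mul_add_one (2 * m); rw [← this]; ring_nf
  have h2 : tm (4 * m + 2) = (tm m + 1) % 2 := by
    have e : 4 * m + 2 = 2 * (2 * m + 1) := by ring
    rw [e, tm_two_mul, tm_two_mul_add_one]
  rw [h1, h2, tm_two_mul]

lemma feq_two_iff (i j : ℕ) : feq i j 2 ↔ tm j = tm i ∧ tm (j + 1) = tm (i + 1) := by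
  constructor
  · intro h
    exact ⟨by simpa using h 0 (by norm_num), by simpa using h 1 (by norm_num)⟩
  · rintro ⟨h0, h1⟩ k hk
    interval_cases k <;> simpa
lemma feqc_two_iff (i j : ℕ) : feqc i j 2 ↔ tm j = 1 - tm i ∧ tm (j + 1) = 1 - tm (i + 1) := by
  constructor
  · intro h
    exact ⟨by simpa using h 0 (by norm_num), by simpa using h 1 (by norm_num)⟩
  · rintro ⟨h0, h1⟩ k hk
    interval_cases k <;> simpa

section Main
variable (i : ℕ)

/-- Case A characterization. -/
lemma occA (hA : tm (i + 1) ≠ tm i) (j : ℕ) :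
    occSet i 2 j ↔ tm (j + 1) ≠ tm j := by
  have bi := tm_lt_two i; have bi1 := tm_lt_two (i + 1)
  have bj := tm_lt_two j; have bj1 := tm_lt_two (j + 1)
  unfold occSet
  rw [feq_two_iff, feqc_two_iff]
  omega

/-- Case B characterization. -/
lemma occB (hB : tm (i + 1) = tm i) (j : ℕ) :
    occSet i 2 j ↔ tm (j + 1) = tm j := by
  have bi := tm_lt_two i; have bi1 := tm_lt_two (i + 1)
  have bj := tm_lt_two j; have bj1 := tm_lt_two (j + 1)
  unfold occSet
  rw [feq_two_iff, feqc_two_iff]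
  omega

lemma occ_infinite : (setOf (occSet i 2)).Infinite := by
  by_cases hA : tm (i + 1) = tm i
  · apply Set.infinite_of_injective_forall_mem (f := fun m : ℕ => 4 * m + 1)
    · intro a b h; simp only [] at h; omega
    · intro m
      show occSet i 2 _; rw [occB i hA]
      exact tm_eq_4m1 m
  · apply Set.infinite_of_injective_forall_mem (f := fun m : ℕ => 2 * m)
    · intro a b h; simp only [] at h; omega
    · intro m
      show occSet i 2 _; rw [occA i hA]
      exact tm_even_ne m

/-- No element of the set lies strictly between consecutive nth values. -/
lemma no_between (m k : ℕ) (hk : occSet i 2 k)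
    (h1 : Nat.nth (occSet i 2) m < k) (h2 : k < Nat.nth (occSet i 2) (m + 1)) : False := by
  have hinf := occ_infinite i
  have hc : Nat.nth (occSet i 2) (Nat.count (occSet i 2) k) = k := Nat.nth_count hk
  rw [← hc] at h1 h2
  rw [Nat.nth_lt_nth hinf] at h1 h2
  omega

/-- Alternation of letters at consecutive occurrences. -/
lemma alt (m : ℕ) :
    tm (Nat.nth (occSet i 2) (m + 1)) ≠ tm (Nat.nth (occSet i 2) m) := by
  have hinf := occ_infinite i
  set x := Nat.nth (occSet i 2) m with hx
  set y := Nat.nth (occSet i 2) (m + 1) with hy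
  have hxm : occSet i 2 x := Nat.nth_mem_of_infinite hinf m
  have hym : occSet i 2 y := Nat.nth_mem_of_infinite hinf (m + 1)
  have hxy : x < y := (Nat.nth_lt_nth hinf).mpr (by omega)
  by_cases hA : tm (i + 1) = tm i
  · -- equal-pair case: x, y odd, everything between differs
    rw [occB i hA] at hxm hym
    have hxodd : x % 2 = 1 := odd_of_tm_eq hxm
    have hyodd : y % 2 = 1 := odd_of_tm_eq hym
    have key : ∀ d, x + 1 + d ≤ y → tm (x + 1 + d) = (tm (x + 1) + d) % 2 := by
      intro d
      induction d with
      | zero => intro _; simpa using (Nat.mod_eq_of_lt (tm_lt_two (x + 1))).symm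
      | succ n ih =>
        intro hle
        have hmid : ¬ occSet i 2 (x + 1 + n) := by
          intro hmem
          exact no_between i m (x + 1 + n) hmem (by omega) (by omega)
        rw [occB i hA] at hmid
        have hne : tm (x + 1 + n + 1) ≠ tm (x + 1 + n) := hmid
        have := ih (by omega)
        have b1 := tm_lt_two (x + 1 + n + 1)
        have b2 := tm_lt_two (x + 1 + n)
        have e : x + 1 + (n + 1) = x + 1 + n + 1 := by omega
        rw [e]
        omega
    have hdy : x + 1 + (y - x - 1) = y := by omega
    have := key (y - x - 1) (by omega)
    rw [hdy] at this
    have bodd : (y - x - 1) % 2 = 1 := by omega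
    have b1 := tm_lt_two (x + 1)
    have b2 := tm_lt_two y
    have b3 := tm_lt_two x
    omega
  · -- differing-pair case: gaps are odd singletons
    rw [occA i hA] at hxm hym
    rcases Nat.lt_or_ge (x + 1) y with hgt | hle
    · -- y ≥ x + 2; show y = x + 2
      have hx1 : ¬ occSet i 2 (x + 1) := fun hmem =>
        no_between i m (x + 1) hmem (by omega) (by omega)
      rw [occA i hA] at hx1
      push_neg at hx1
      have hx1odd : (x + 1) % 2 = 1 := odd_of_tm_eq hx1
      have hx2mem : occSet i 2 (x + 2) := by
        rw [occA i hA]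
        have e : x + 2 = 2 * ((x + 2) / 2) := by omega
        rw [e]; exact fun h => tm_even_ne _ h
      have hy2 : y = x + 2 := by
        by_contra hne
        exact no_between i m (x + 2) hx2mem (by omega) (by omega)
      have hx1' : tm (x + 2) = tm (x + 1) := by
        rw [show x + 2 = x + 1 + 1 by omega]; exact hx1
      rw [hy2]
      have b1 := tm_lt_two (x + 2); have b2 := tm_lt_two (x + 1); have b3 := tm_lt_two x
      omega
    · have : y = x + 1 := by omega
      rw [this]
      exact hxm

lemma itw_eq (m : ℕ) :
    itw i 2 m = if tm (Nat.nth (occSet i 2) m) = tm i then 0 else 1 := by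
  have hinf := occ_infinite i
  have hmem : occSet i 2 (Nat.nth (occSet i 2) m) := Nat.nth_mem_of_infinite hinf m
  set j := Nat.nth (occSet i 2) m with hj
  have bi := tm_lt_two i; have bi1 := tm_lt_two (i + 1)
  have bj := tm_lt_two j; have bj1 := tm_lt_two (j + 1)
  have key : feq i j 2 ↔ tm j = tm i := by
    rw [feq_two_iff]
    rcases hmem with h | h
    · rw [feq_two_iff] at h
      omega
    · rw [feqc_two_iff] at h
      omega
  unfold itw
  rw [← hj, key]
  by_cases hc : tm j = tm i <;> simp [hc]

lemma itw_alt (m : ℕ) : itw i 2 (m + 1) ≠ itw i 2 m := by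
  have h1 := itw_eq i m
  have h2 := itw_eq i (m + 1)
  have h3 := alt i m
  have b1 := tm_lt_two (Nat.nth (occSet i 2) m)
  have b2 := tm_lt_two (Nat.nth (occSet i 2) (m + 1))
  have b3 := tm_lt_two i
  by_cases c1 : tm (Nat.nth (occSet i 2) (m + 1)) = tm i <;>
    by_cases c2 : tm (Nat.nth (occSet i 2) m) = tm i <;>
      simp [c1, c2] at h1 h2 <;> omega

lemma itw_le_one (m : ℕ) : itw i 2 m ≤ 1 := by
  rw [itw_eq]; split <;> omega

end Main

/-- For length-2 factors of the Thue-Morse word, the only intertwining patterns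
are (AB)^ω and (BA)^ω; in particular (ABBA)^ω does not occur. -/
theorem tm_length_two_patterns (i : ℕ) :
    (ABpat i 2 ∨ BApat i 2) ∧ ¬ ABBApat i 2 ∧ ¬ BAABpat i 2 := by
  have halt := itw_alt i
  have hle := itw_le_one i
  refine ⟨?_, ?_, ?_⟩
  · by_cases h0 : itw i 2 0 = 0
    · left
      intro m
      induction m with
      | zero => simpa using h0
      | succ n ih =>
        have := halt n
        have := hle (n + 1)
        omega
    · right
      intro m
      induction m with
      | zero => have := hle 0; simp; omega
      | succ n ih =>
        have := halt n
        have := hle (n + 1)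
        omega
  · intro h
    have h1 := h 1
    have h2 := h 2
    norm_num at h1 h2
    have halt1 : itw i 2 2 ≠ itw i 2 1 := halt 1
    omega
  · intro h
    have h1 := h 1
    have h2 := h 2
    norm_num at h1 h2
    have halt1 : itw i 2 2 ≠ itw i 2 1 := halt 1
    omega
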